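/- For every m ∈ ℕ, the preimage entropy dimension of the iterate T^m equals that of T: D_pre(T^m) = D_pre(T). -/

import Mathlib

open Filter Set
open scoped ENNReal

variable {X : Type*}

/-- The Bowen metric `d_{T,n}(x,y) = max_{0 ≤ j < n} d(T^j x, T^j y)`. -/
noncomputable def bowenDist [PseudoMetricSpace X] (T : X → X) (n : ℕ) (x y : X) : ℝ :=
  ⨆ j : Fin n, dist (T^[(j : ℕ)] x) (T^[(j : ℕ)] y)

/-- `E` is an `(n,ε,K,T)`-separated set. -/
def IsPreSeparated [PseudoMetricSpace X] (T : X → X) (n : ℕ) (ε : ℝ) (K : Set X)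
    (E : Set X) : Prop :=
  E ⊆ K ∧ ∀ x ∈ E, ∀ y ∈ E, x ≠ y → ε < bowenDist T n x y

/-- `E` is an `(n,ε,K,T)`-spanning set. -/
def IsPreSpanning [PseudoMetricSpace X] (T : X → X) (n : ℕ) (ε : ℝ) (K : Set X)
    (E : Set X) : Prop :=
  E ⊆ K ∧ ∀ x ∈ K, ∃ y ∈ E, bowenDist T n x y ≤ ε

/-- `r(n,ε,K,T)`: maximal cardinality of an `(n,ε,K,T)`-separated set. -/
noncomputable def sepMax [PseudoMetricSpace X] (T : X → X) (n : ℕ) (ε : ℝ) (K : Set X) : ℝ≥0∞ :=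
  ⨆ (E : Finset X) (_ : IsPreSeparated T n ε K ↑E), (E.card : ℝ≥0∞)

/-- `s(n,ε,K,T)`: minimal cardinality of an `(n,ε,K,T)`-spanning set. -/
noncomputable def spanMin [PseudoMetricSpace X] (T : X → X) (n : ℕ) (ε : ℝ) (K : Set X) : ℝ≥0∞ :=
  ⨅ (E : Finset X) (_ : IsPreSpanning T n ε K ↑E), (E.card : ℝ≥0∞)

/-- The `s`-preimage entropy
`D_pre(s,T) = lim_{ε→0} limsup_n (1/n^s) log sup_{x ∈ X, k ≥ n} r(n,ε,T^{-k}(x),T)`,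
where the (monotone) limit as `ε → 0` is expressed as a supremum over `ε > 0`. -/
noncomputable def preEnt [PseudoMetricSpace X] (T : X → X) (s : ℝ) : EReal :=
  ⨆ (ε : ℝ) (_ : 0 < ε), Filter.atTop.limsup fun n : ℕ =>
    (((((n : ℝ) ^ s)⁻¹ : ℝ) : EReal)) *
      ENNReal.log (⨆ (x : X) (k : ℕ) (_ : n ≤ k), sepMax T n ε (T^[k] ⁻¹' {x}))

/-- The preimage entropy `h_pre(T)`. -/
noncomputable def preimageEntropy [PseudoMetricSpace X] (T : X → X) : EReal := preEnt T 1

/-- The preimage entropy dimension `D_pre(T) = inf {s > 0 : D_pre(s,T) = 0}`. -/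
noncomputable def preDim [PseudoMetricSpace X] (T : X → X) : ℝ≥0∞ :=
  ⨅ (s : ℝ) (_ : 0 < s ∧ preEnt T s = 0), ENNReal.ofReal s

/-!
A set that is `ε`-separated for `T^m` in `n` steps is `ε`-separated for `T` in `mn` steps, and
`(T^m)^{-k}(x) = T^{-mk}(x)`; so the counts for `T^m` at time `n` are bounded by those of `T` at
time `mn`, and `D_pre(s,T) = 0` forces `D_pre(s,T^m) = 0`, the normalisation changing only by the
factor `m^s`. Conversely, uniform continuity of `T, …, T^{m-1}` on the compact space yields `δ`
such that `ε`-separation for `T` in `n` steps forces `δ`-separation for `T^m` in `⌈n/m⌉ ≤ n`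
steps, while `T^{-k}(x) ⊆ (T^m)^{-⌈k/m⌉}(T^{m⌈k/m⌉-k} x)`. Hence both maps have the same
exponents `s > 0` of vanishing `s`-entropy.
-/

open Function

lemma EReal.limsup_nonpos_of_eventually_le_const_mul_comp {α β : Type*} {l : Filter α}
    [l.NeBot] {l' : Filter β} {u : α → EReal} {v : β → EReal} {g : α → β} {c : ℝ}
    (hc : 0 ≤ c) (hg : Tendsto g l l') (huv : ∀ᶠ a in l, u a ≤ c * v (g a))
    (hv : limsup v l' ≤ 0) : limsup u l ≤ 0 :=
  calc limsup u l ≤ limsup (fun a => (c : EReal) * v (g a)) l := limsup_le_limsup huv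
    _ = c * limsup (v ∘ g) l :=
      EReal.limsup_const_mul_of_nonneg_of_ne_top (EReal.coe_nonneg.2 hc) (EReal.coe_ne_top c)
    _ ≤ c * 0 := mul_le_mul_of_nonneg_left (hg.limsup_comp_le_limsup.trans hv)
      (EReal.coe_nonneg.2 hc)
    _ = 0 := mul_zero _

lemma preimage_iterate_subset (T : X → X) {k l : ℕ} (h : k ≤ l) (x : X) :
    T^[k] ⁻¹' {x} ⊆ T^[l] ⁻¹' {T^[l - k] x} := by
  intro z hz
  simp only [mem_preimage, mem_singleton_iff] at hz ⊢
  rw [← hz, ← iterate_add_apply, Nat.sub_add_cancel h]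

lemma tendsto_ceilDiv_atTop {m : ℕ} (hm : 0 < m) : Tendsto (fun n : ℕ => n ⌈/⌉ m) atTop atTop :=
  tendsto_atTop_mono (fun _ => floorDiv_le_ceilDiv) (Nat.tendsto_div_const_atTop hm.ne')

section PseudoMetric

variable [PseudoMetricSpace X] {T : X → X} {s : ℝ}

lemma bowenDist_nonneg (T : X → X) (n : ℕ) (x y : X) : 0 ≤ bowenDist T n x y :=
  Real.iSup_nonneg fun _ => dist_nonneg

lemma dist_iterate_le_bowenDist {n j : ℕ} (hj : j < n) (x y : X) :
    dist (T^[j] x) (T^[j] y) ≤ bowenDist T n x y :=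
  le_ciSup (f := fun i : Fin n => dist (T^[(i : ℕ)] x) (T^[(i : ℕ)] y))
    (finite_range _).bddAbove ⟨j, hj⟩

lemma bowenDist_mono {n n' : ℕ} (h : n ≤ n') (x y : X) :
    bowenDist T n x y ≤ bowenDist T n' x y :=
  Real.iSup_le (fun j => dist_iterate_le_bowenDist (j.isLt.trans_le h) x y)
    (bowenDist_nonneg T n' x y)

lemma bowenDist_iterate_le {m : ℕ} (hm : 0 < m) (n : ℕ) (x y : X) :
    bowenDist (T^[m]) n x y ≤ bowenDist T (m * n) x y := by
  refine Real.iSup_le (fun j => ?_) (bowenDist_nonneg T _ x y)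
  rw [← iterate_mul]
  exact dist_iterate_le_bowenDist (Nat.mul_lt_mul_of_pos_left j.isLt hm) x y

lemma bowenDist_le_of_bowenDist_iterate_le {m n : ℕ} {δ ε : ℝ} (hε : 0 ≤ ε)
    (hδ : ∀ x y : X, dist x y ≤ δ → ∀ j < m, dist (T^[j] x) (T^[j] y) ≤ ε)
    {x y : X} (h : bowenDist (T^[m]) n x y ≤ δ) :
    bowenDist T (m * n) x y ≤ ε := by
  refine Real.iSup_le (fun i => ?_) hε
  have hm : 0 < m := Nat.pos_of_mul_pos_right (Nat.zero_lt_of_lt i.isLt)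
  have hi : T^[(i : ℕ)] = T^[(i : ℕ) % m] ∘ (T^[m])^[(i : ℕ) / m] := by
    rw [← iterate_mul, ← iterate_add, Nat.mod_add_div]
  rw [hi]
  exact hδ _ _ ((dist_iterate_le_bowenDist (Nat.div_lt_of_lt_mul i.isLt) x y).trans h) _
    (Nat.mod_lt _ hm)

lemma IsPreSeparated.of_iterate {m n : ℕ} (hm : 0 < m) {ε : ℝ} {K E : Set X}
    (h : IsPreSeparated (T^[m]) n ε K E) : IsPreSeparated T (m * n) ε K E :=
  ⟨h.1, fun x hx y hy hxy => (h.2 x hx y hy hxy).trans_le (bowenDist_iterate_le hm n x y)⟩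

lemma IsPreSeparated.iterate {m n N : ℕ} {δ ε : ℝ} (hε : 0 ≤ ε)
    (hδ : ∀ x y : X, dist x y ≤ δ → ∀ j < m, dist (T^[j] x) (T^[j] y) ≤ ε)
    (hn : n ≤ m * N) {K K' E : Set X} (hK : K ⊆ K') (h : IsPreSeparated T n ε K E) :
    IsPreSeparated (T^[m]) N δ K' E :=
  ⟨h.1.trans hK, fun x hx y hy hxy => not_le.1 fun hle => (h.2 x hx y hy hxy).not_ge <|
    (bowenDist_mono hn x y).trans (bowenDist_le_of_bowenDist_iterate_le hε hδ hle)⟩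

lemma sepMax_le_sepMax {T₁ T₂ : X → X} {n₁ n₂ : ℕ} {ε₁ ε₂ : ℝ} {K₁ K₂ : Set X}
    (h : ∀ E : Finset X, IsPreSeparated T₁ n₁ ε₁ K₁ E → IsPreSeparated T₂ n₂ ε₂ K₂ E) :
    sepMax T₁ n₁ ε₁ K₁ ≤ sepMax T₂ n₂ ε₂ K₂ :=
  iSup₂_mono' fun E hE => ⟨E, h E hE, le_rfl⟩

lemma one_le_sepMax {n : ℕ} {ε : ℝ} {K : Set X} {x : X} (hx : x ∈ K) : 1 ≤ sepMax T n ε K :=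
  le_iSup₂_of_le {x} ⟨by simpa using hx, by simp⟩ (by simp)

noncomputable def preimageSepMax (T : X → X) (n : ℕ) (ε : ℝ) : ℝ≥0∞ :=
  ⨆ (x : X) (k : ℕ) (_ : n ≤ k), sepMax T n ε (T^[k] ⁻¹' {x})

lemma sepMax_preimage_le_preimageSepMax (x : X) {n k : ℕ} (hk : n ≤ k) (ε : ℝ) :
    sepMax T n ε (T^[k] ⁻¹' {x}) ≤ preimageSepMax T n ε :=
  le_iSup₂_of_le x k (le_iSup_of_le hk le_rfl)

lemma one_le_preimageSepMax [Nonempty X] (T : X → X) (n : ℕ) (ε : ℝ) :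
    1 ≤ preimageSepMax T n ε :=
  (one_le_sepMax (K := T^[n] ⁻¹' {T^[n] (Classical.arbitrary X)}) rfl).trans
    (sepMax_preimage_le_preimageSepMax _ le_rfl ε)

lemma preimageSepMax_iterate_le {m : ℕ} (hm : 0 < m) (n : ℕ) (ε : ℝ) :
    preimageSepMax (T^[m]) n ε ≤ preimageSepMax T (m * n) ε := by
  refine iSup₂_le fun x k => iSup_le fun hk => ?_
  rw [← iterate_mul]
  exact (sepMax_le_sepMax fun E hE => hE.of_iterate hm).trans
    (sepMax_preimage_le_preimageSepMax x (Nat.mul_le_mul_left m hk) ε)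

lemma preimageSepMax_le_iterate {m : ℕ} (hm : 0 < m) {δ ε : ℝ} (hε : 0 ≤ ε)
    (hδ : ∀ x y : X, dist x y ≤ δ → ∀ j < m, dist (T^[j] x) (T^[j] y) ≤ ε) (n : ℕ) :
    preimageSepMax T n ε ≤ preimageSepMax (T^[m]) (n ⌈/⌉ m) δ := by
  refine iSup₂_le fun x k => iSup_le fun hk => ?_
  have hsub : T^[k] ⁻¹' {x} ⊆ (T^[m])^[k ⌈/⌉ m] ⁻¹' {T^[m * (k ⌈/⌉ m) - k] x} := by
    rw [← iterate_mul]
    exact preimage_iterate_subset T (le_smul_ceilDiv hm) x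
  exact (sepMax_le_sepMax fun E hE => hE.iterate hε hδ (le_smul_ceilDiv hm) hsub).trans
    (sepMax_preimage_le_preimageSepMax _ ((gc_mul_ceilDiv hm).monotone_l hk) δ)

noncomputable def preEntSeq (T : X → X) (s ε : ℝ) (n : ℕ) : EReal :=
  ((((n : ℝ) ^ s)⁻¹ : ℝ) : EReal) * ENNReal.log (preimageSepMax T n ε)

lemma preEnt_nonpos_iff :
    preEnt T s ≤ 0 ↔ ∀ ε : ℝ, 0 < ε → limsup (preEntSeq T s ε) atTop ≤ 0 :=
  iSup₂_le_iff

lemma coe_inv_rpow_natCast_nonneg (n : ℕ) (s : ℝ) : (0 : EReal) ≤ (((n : ℝ) ^ s)⁻¹ : ℝ) :=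
  EReal.coe_nonneg.2 (inv_nonneg.2 (Real.rpow_nonneg n.cast_nonneg s))

lemma preEntSeq_nonneg [Nonempty X] (T : X → X) (s ε : ℝ) (n : ℕ) : 0 ≤ preEntSeq T s ε n :=
  EReal.mul_nonneg (coe_inv_rpow_natCast_nonneg n s)
    (ENNReal.zero_le_log_iff.2 (one_le_preimageSepMax T n ε))

lemma preEnt_nonneg [Nonempty X] (T : X → X) (s : ℝ) : 0 ≤ preEnt T s :=
  le_iSup₂_of_le 1 one_pos <|
    le_limsup_of_frequently_le (Frequently.of_forall (preEntSeq_nonneg T s 1)) (by isBoundedDefault)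

lemma preEntSeq_iterate_le {m : ℕ} (hm : 0 < m) (s ε : ℝ) (n : ℕ) :
    preEntSeq (T^[m]) s ε n ≤ (((m : ℝ) ^ s : ℝ) : EReal) * preEntSeq T s ε (m * n) := by
  have hcoef : ((n : ℝ) ^ s)⁻¹ = (m : ℝ) ^ s * (((m * n : ℕ) : ℝ) ^ s)⁻¹ := by
    have : (m : ℝ) ^ s ≠ 0 := (Real.rpow_pos_of_pos (Nat.cast_pos.2 hm) s).ne'
    rw [Nat.cast_mul, Real.mul_rpow m.cast_nonneg n.cast_nonneg, mul_inv, ← mul_assoc,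
      mul_inv_cancel₀ this, one_mul]
  calc preEntSeq (T^[m]) s ε n
      ≤ (((n : ℝ) ^ s)⁻¹ : ℝ) * ENNReal.log (preimageSepMax T (m * n) ε) :=
        mul_le_mul_of_nonneg_left (ENNReal.log_monotone (preimageSepMax_iterate_le hm n ε))
          (coe_inv_rpow_natCast_nonneg n s)
    _ = (((m : ℝ) ^ s : ℝ) : EReal) * preEntSeq T s ε (m * n) := by
        rw [preEntSeq, ← mul_assoc, ← EReal.coe_mul, ← hcoef]

lemma preEntSeq_le_iterate [Nonempty X] {m : ℕ} (hm : 0 < m) (hs : 0 ≤ s) {δ ε : ℝ}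
    (hε : 0 ≤ ε) (hδ : ∀ x y : X, dist x y ≤ δ → ∀ j < m, dist (T^[j] x) (T^[j] y) ≤ ε)
    {n : ℕ} (hn : 0 < n) :
    preEntSeq T s ε n ≤ preEntSeq (T^[m]) s δ (n ⌈/⌉ m) := by
  have hN : n ⌈/⌉ m ≤ n := (ceilDiv_le_iff_le_mul hm).2 (Nat.le_mul_of_pos_left n hm)
  have hN0 : 0 < n ⌈/⌉ m := Nat.pos_of_ne_zero fun h => by
    simpa [h] using hn.trans_le (le_smul_ceilDiv (b := n) hm)
  have hcoef : ((n : ℝ) ^ s)⁻¹ ≤ (((n ⌈/⌉ m : ℕ) : ℝ) ^ s)⁻¹ :=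
    inv_anti₀ (Real.rpow_pos_of_pos (Nat.cast_pos.2 hN0) s)
      (Real.rpow_le_rpow (Nat.cast_nonneg _) (Nat.cast_le.2 hN) hs)
  calc preEntSeq T s ε n
      ≤ (((n : ℝ) ^ s)⁻¹ : ℝ) * ENNReal.log (preimageSepMax (T^[m]) (n ⌈/⌉ m) δ) :=
        mul_le_mul_of_nonneg_left
          (ENNReal.log_monotone (preimageSepMax_le_iterate hm hε hδ n))
          (coe_inv_rpow_natCast_nonneg n s)
    _ ≤ preEntSeq (T^[m]) s δ (n ⌈/⌉ m) :=
        mul_le_mul_of_nonneg_right (EReal.coe_le_coe_iff.2 hcoef)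
          (ENNReal.zero_le_log_iff.2 (one_le_preimageSepMax _ _ δ))

lemma preEnt_iterate_nonpos {m : ℕ} (hm : 0 < m) (h : preEnt T s ≤ 0) :
    preEnt (T^[m]) s ≤ 0 :=
  preEnt_nonpos_iff.2 fun ε hε =>
    EReal.limsup_nonpos_of_eventually_le_const_mul_comp (Real.rpow_nonneg m.cast_nonneg s)
      (tendsto_id.const_mul_atTop' hm) (Eventually.of_forall (preEntSeq_iterate_le hm s ε))
      (preEnt_nonpos_iff.1 h ε hε)

lemma exists_pos_forall_dist_iterate_le [CompactSpace X] (hT : Continuous T) (m : ℕ) {ε : ℝ}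
    (hε : 0 < ε) :
    ∃ δ > 0, ∀ x y : X, dist x y ≤ δ → ∀ j < m, dist (T^[j] x) (T^[j] y) ≤ ε := by
  have hF : UniformContinuous fun x (j : Fin m) => T^[j] x :=
    CompactSpace.uniformContinuous_of_continuous (continuous_pi fun j => hT.iterate j)
  obtain ⟨δ, hδ, hF⟩ := Metric.uniformContinuous_iff.1 hF ε hε
  refine ⟨δ / 2, half_pos hδ, fun x y hxy j hj => ?_⟩
  exact (dist_le_pi_dist _ _ ⟨j, hj⟩).trans (hF (hxy.trans_lt (half_lt_self hδ))).le

lemma preEnt_nonpos_of_iterate [CompactSpace X] [Nonempty X] (hT : Continuous T) {m : ℕ}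
    (hm : 0 < m) (hs : 0 ≤ s) (h : preEnt (T^[m]) s ≤ 0) : preEnt T s ≤ 0 := by
  refine preEnt_nonpos_iff.2 fun ε hε => ?_
  obtain ⟨δ, hδ, hδε⟩ := exists_pos_forall_dist_iterate_le hT m hε
  refine EReal.limsup_nonpos_of_eventually_le_const_mul_comp zero_le_one
    (tendsto_ceilDiv_atTop hm) ?_ (preEnt_nonpos_iff.1 h δ hδ)
  filter_upwards [eventually_gt_atTop 0] with n hn
  simpa only [EReal.coe_one, one_mul] using preEntSeq_le_iterate hm hs hε.le hδε hn

lemma preEnt_iterate_eq_zero_iff [CompactSpace X] (hT : Continuous T) {m : ℕ} (hm : 0 < m)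
    (hs : 0 ≤ s) :
    preEnt (T^[m]) s = 0 ↔ preEnt T s = 0 := by
  rcases isEmpty_or_nonempty X with hX | hX
  · rw [Subsingleton.elim (T^[m]) T]
  simp only [le_antisymm_iff, preEnt_nonneg, and_true]
  exact ⟨preEnt_nonpos_of_iterate hT hm hs, preEnt_iterate_nonpos hm⟩

end PseudoMetric

theorem preDim_iterate {X : Type*} [MetricSpace X] [CompactSpace X]
    {T : X → X} (hT : Continuous T) (m : ℕ) (hm : 0 < m) :
    preDim (T^[m]) = preDim T :=
  iInf_congr fun _ => iInf_congr_Prop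
    (and_congr_right fun hs => preEnt_iterate_eq_zero_iff hT hm hs.le) fun _ => rfl
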